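/- The odd writhe polynomial is invariant under the Gauss-diagram Reidemeister move Ω2: if two chords c_m, c_n have opposite signs, with their two 'over' endpoints adjacent on one arc and their two 'under' endpoints adjacent on another arc (in the configuration of the Ω2 move), then deleting both chords does not change f(t). -/

import Mathlib

open Finset LaurentPolynomial

/-- A signed, oriented chord diagram (combinatorial Gauss diagram) with `n` chords:
the `2*n` chord endpoints on the circle are the elements of `Fin (2*n)` in (positive)
cyclic order; chord `i` has over endpoint `c⁺ = ep (i, true)`, under endpoint
`c⁻ = ep (i, false)` and a sign (writhe) `sign i ∈ {1, -1}`. -/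
structure ChordDiagram (n : ℕ) where
  ep : Fin n × Bool ≃ Fin (2 * n)
  sign : Fin n → ℤ
  sign_unit : ∀ i, sign i = 1 ∨ sign i = -1

namespace ChordDiagram

variable {n : ℕ}

/-- the over endpoint `c⁺` of a chord -/
def _root_.ChordDiagram.over (D : ChordDiagram n) (i : Fin n) : Fin (2 * n) := D.ep (i, true)

/-- the under endpoint `c⁻` of a chord -/
def under (D : ChordDiagram n) (i : Fin n) : Fin (2 * n) := D.ep (i, false)

/-- the number of steps from `b` to `x`, travelling in the positive direction
around the circle -/
def relpos (b x : Fin (2 * n)) : ℕ := (x.val + 2 * n - b.val) % (2 * n)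

/-- `x` lies strictly between the endpoints of chord `i`, on the side swept out
going from `c⁺` to `c⁻` in the positive direction -/
def StrictlyBetween (D : ChordDiagram n) (i : Fin n) (x : Fin (2 * n)) : Prop :=
  0 < relpos (D.over i) x ∧ relpos (D.over i) x < relpos (D.over i) (D.under i)

instance (D : ChordDiagram n) (i : Fin n) (x : Fin (2 * n)) :
    Decidable (D.StrictlyBetween i x) := inferInstanceAs (Decidable (_ ∧ _))

/-- two distinct chords interlink if their endpoints alternate around the circle,
i.e. exactly one endpoint of `j` lies strictly between the endpoints of `i` -/
def Interlinks (D : ChordDiagram n) (i j : Fin n) : Prop :=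
  i ≠ j ∧ Xor (D.StrictlyBetween i (D.over j)) (D.StrictlyBetween i (D.under j))

instance (D : ChordDiagram n) (i j : Fin n) : Decidable (D.Interlinks i j) :=
  inferInstanceAs (Decidable (_ ∧ _))

/-- the number of chords interlinking chord `i` -/
def interlinkCount (D : ChordDiagram n) (i : Fin n) : ℕ :=
  (univ.filter fun j => D.Interlinks i j).card

/-- the number of chord endpoints lying (strictly) on one side of chord `i` -/
def sideCount (D : ChordDiagram n) (i : Fin n) : ℕ :=
  (univ.filter fun x => D.StrictlyBetween i x).card

/-- a chord is odd if it interlinks an odd number of other chords -/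
def OddChord (D : ChordDiagram n) (i : Fin n) : Prop := Odd (D.interlinkCount i)

instance (D : ChordDiagram n) (i : Fin n) : Decidable (D.OddChord i) :=
  inferInstanceAs (Decidable (Odd _))

/-- The label `N(a)` of the arc whose terminal point is `a`: the sum of the signs of
all chords whose over endpoint is met strictly before their under endpoint when
traversing the circle once in the positive direction starting inside this arc. -/
def arcLabel (D : ChordDiagram n) (a : Fin (2 * n)) : ℤ :=
  ∑ i ∈ univ.filter fun i => relpos a (D.over i) < relpos a (D.under i), D.sign i

/-- The value `N(c)` of a chord: for a positive chord, the difference `x - y` of the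
arc labels just before `c⁺` and just before `c⁻`; for a negative chord, the difference
`z - w` of the arc labels just after `c⁺` and just after `c⁻` (the label just after an
over endpoint is the label just before it minus the sign, and the label just after an
under endpoint is the label just before it plus the sign). -/
def chordVal (D : ChordDiagram n) (i : Fin n) : ℤ :=
  if D.sign i = 1 then D.arcLabel (D.over i) - D.arcLabel (D.under i)
  else (D.arcLabel (D.over i) - D.sign i) - (D.arcLabel (D.under i) + D.sign i)

/-- the odd writhe `J(K) = Σ_{c odd} w(c)` -/
def oddWrithe (D : ChordDiagram n) : ℤ :=
  ∑ i ∈ univ.filter fun i => D.OddChord i, D.sign i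

/-- the odd writhe polynomial `f_K(t) = Σ_{c odd} w(c) · t^{N(c)} ∈ ℤ[t,t⁻¹]` -/
noncomputable def owp (D : ChordDiagram n) : LaurentPolynomial ℤ :=
  ∑ i ∈ univ.filter fun i => D.OddChord i, C (D.sign i) * T (D.chordVal i)

/-- evaluation of the odd writhe polynomial at a rational number `x`:
`Σ_{c odd} w(c) · x^{N(c)}` -/
def owpEval (D : ChordDiagram n) (x : ℚ) : ℚ :=
  ∑ i ∈ univ.filter fun i => D.OddChord i, (D.sign i : ℚ) * x ^ D.chordVal i

/-- the coefficient of `t^k` in a Laurent polynomial -/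
def coeffOf (f : LaurentPolynomial ℤ) (k : ℤ) : ℤ := f.coeff k

/-- the degree `Deg f = max { |i| : coefficient of tⁱ in f is nonzero }` -/
def owpDeg (f : LaurentPolynomial ℤ) : ℕ := f.coeff.support.sup fun k => k.natAbs

/-- reversing the orientation of the knot: the cyclic order of the endpoints is
reversed, while signs and over/under data of the crossings are preserved -/
def reverse (D : ChordDiagram n) : ChordDiagram n where
  ep := D.ep.trans Fin.revPerm
  sign := D.sign
  sign_unit := D.sign_unit

/-- the mirror image: every crossing is switched, so every chord's over and under
endpoints are exchanged and its sign is negated -/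
def mirror (D : ChordDiagram n) : ChordDiagram n where
  ep := (Equiv.prodCongr (Equiv.refl (Fin n))
      ⟨fun b => !b, fun b => !b, Bool.not_not, Bool.not_not⟩).trans D.ep
  sign := fun i => -D.sign i
  sign_unit := fun i => (D.sign_unit i).elim
    (fun h => Or.inr (show -D.sign i = -1 by rw [h]))
    (fun h => Or.inl (show -D.sign i = 1 by rw [h]; ring))

/-! ### Planarity via the Euler characteristic of the carrier surface

The diagram determines a 4-valent graph (vertices = chords, edges = the `2*n` arcs of
the circle) together with a rotation system at each vertex, coming from the structure
of a transversal crossing: for a positive crossing the counterclockwise order of the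
four ends is (over-out, under-out, over-in, under-in), for a negative crossing it is
(over-out, under-in, over-in, under-out).  The diagram is realizable by a classical
(planar) knot diagram iff the resulting closed oriented carrier surface is a sphere,
i.e. iff `V - E + F = n - 2n + F = 2`.

Darts are encoded as pairs `(p, io) : Fin (2*n) × Bool`, meaning the end of an arc
at the vertex through the circle point `p`, with `io = true` for the outgoing arc
(from `p` to `p+1`) and `io = false` for the incoming arc (from `p-1` to `p`). -/

/-- the other endpoint of the chord through a given endpoint -/
def otherEnd (D : ChordDiagram n) (p : Fin (2 * n)) : Fin (2 * n) :=
  D.ep ((D.ep.symm p).1, !(D.ep.symm p).2)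

lemma otherEnd_otherEnd (D : ChordDiagram n) (p : Fin (2 * n)) :
    D.otherEnd (D.otherEnd p) = p := by
  simp [otherEnd]

/-- whether the rotation at the vertex toggles the in/out marker when passing from
the end at `p` to the end at the other endpoint of its chord -/
def tog (D : ChordDiagram n) (p : Fin (2 * n)) : Bool :=
  if D.sign (D.ep.symm p).1 = 1 then !(D.ep.symm p).2 else (D.ep.symm p).2

/-- the vertex rotation permutation on darts -/
def vertexPerm (D : ChordDiagram n) : Equiv.Perm (Fin (2 * n) × Bool) :=
  Equiv.trans
    ⟨fun x => (x.1, xor x.2 (D.tog x.1)), fun x => (x.1, xor x.2 (D.tog x.1)),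
      fun x => by simp [Bool.xor_assoc], fun x => by simp [Bool.xor_assoc]⟩
    ⟨fun x => (D.otherEnd x.1, x.2), fun x => (D.otherEnd x.1, x.2),
      fun x => by simp [otherEnd_otherEnd], fun x => by simp [otherEnd_otherEnd]⟩

/-- the edge involution on darts, matching the two ends of each arc -/
def arcPerm (D : ChordDiagram n) : Equiv.Perm (Fin (2 * n) × Bool) :=
  ⟨fun x => if x.2 then (finRotate (2 * n) x.1, false) else ((finRotate (2 * n)).symm x.1, true),
   fun x => if x.2 then (finRotate (2 * n) x.1, false) else ((finRotate (2 * n)).symm x.1, true),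
   fun x => by rcases x with ⟨p, _ | _⟩ <;> simp only [Bool.false_eq_true, if_false, if_true, Equiv.apply_symm_apply, Equiv.symm_apply_apply],
   fun x => by rcases x with ⟨p, _ | _⟩ <;> simp only [Bool.false_eq_true, if_false, if_true, Equiv.apply_symm_apply, Equiv.symm_apply_apply]⟩

/-- the face permutation on darts -/
def facePerm (D : ChordDiagram n) : Equiv.Perm (Fin (2 * n) × Bool) :=
  (D.arcPerm).trans D.vertexPerm

/-- the number of faces: the number of orbits of the face permutation -/
noncomputable def faceCount (D : ChordDiagram n) : ℕ :=
  Nat.card (MulAction.orbitRel.Quotient (Subgroup.zpowers D.facePerm) (Fin (2 * n) × Bool))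

/-- the chord diagram arises from a classical (planar) knot diagram: the carrier
surface has Euler characteristic `V - E + F = n - 2n + faceCount = 2` -/
def PlanarRealizable (D : ChordDiagram n) : Prop := D.faceCount = n + 2

end ChordDiagram


open ChordDiagram

/-!
An arc label counts the chords whose over endpoint comes first. Since the over endpoints and
the under endpoints of `cm`, `cn` are adjacent, every surviving arc reads the two chords in the
same order, so their contributions `w(cm) + w(cn) = 0` cancel: every surviving arc label, hence
every surviving `N(c)`, is unchanged by the deletion. A surviving chord interlinks both or
neither of `cm`, `cn`, so its parity is unchanged, and `cm`, `cn` interlink equally many chords.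
Finally, stepping across an over (under) endpoint lowers (raises) the arc label by the sign of
its chord, which gives `N(cm) = N(cn)`; hence `w(cm) t^N(cm) + w(cn) t^N(cn) = 0`.
-/
lemma Finset.sum_univ_eq_add_add_sum_embedding {α β M : Type*} [Fintype α] [Fintype β]
    [AddCommMonoid M] (hcard : Fintype.card α = Fintype.card β + 2) {a a' : α} (ha : a ≠ a')
    (ψ : β ↪ α) (hψ : ∀ k, ψ k ≠ a ∧ ψ k ≠ a') (f : α → M) :
    ∑ i, f i = f a + f a' + ∑ k, f (ψ k) := by
  classical
  have ha'ψ : a' ∉ univ.map ψ := by simp [hψ]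
  have haψ : a ∉ insert a' (univ.map ψ) := by simp [ha, hψ]
  have huniv : insert a (insert a' (univ.map ψ)) = univ :=
    eq_univ_of_card _ (by simp [card_insert_of_notMem haψ, card_insert_of_notMem ha'ψ, hcard])
  rw [← huniv, sum_insert haψ, sum_insert ha'ψ, sum_map, add_assoc]

namespace ChordDiagram

variable {n : ℕ}

lemma relpos_eq (a b : Fin (2 * n)) :
    relpos a b = if a.val ≤ b.val then b.val - a.val else b.val + 2 * n - a.val := by
  have := b.isLt
  unfold relpos
  split_ifs
  · rw [show b.val + 2 * n - a.val = b.val - a.val + 2 * n by omega, Nat.add_mod_right,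
      Nat.mod_eq_of_lt (by omega)]
  · rw [Nat.mod_eq_of_lt (by omega)]

lemma relpos_self (a : Fin (2 * n)) : relpos a a = 0 := by
  simp [relpos_eq]

lemma relpos_pos_iff {a b : Fin (2 * n)} : 0 < relpos a b ↔ a ≠ b := by
  have := a.isLt; have := b.isLt
  rw [relpos_eq, Ne, Fin.ext_iff]
  split_ifs <;> omega

lemma relpos_injective (a : Fin (2 * n)) : Function.Injective (relpos a) := by
  intro x y h
  have := a.isLt; have := x.isLt; have := y.isLt
  rw [relpos_eq, relpos_eq] at h
  ext
  split_ifs at h <;> omega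

lemma relpos_lt_relpos_comp_iff {m : ℕ} {φ : Fin (2 * n) → Fin (2 * m)} (hφ : StrictMono φ)
    (a b c : Fin (2 * n)) :
    relpos (φ a) (φ b) < relpos (φ a) (φ c) ↔ relpos a b < relpos a c := by
  have key : ∀ x y : Fin (2 * n), (φ x).val < (φ y).val ↔ x.val < y.val := fun x y => hφ.lt_iff_lt
  have := key a b; have := key a c; have := key b c
  have := key b a; have := key c a; have := key c b
  have := (φ a).isLt; have := (φ b).isLt; have := (φ c).isLt
  have := a.isLt; have := b.isLt; have := c.isLt
  simp only [relpos_eq]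
  split_ifs <;> omega

lemma relpos_lt_relpos_of_relpos_eq_one {a b x : Fin (2 * n)} (h : relpos a b = 1)
    (hx : x ≠ a) : relpos b x < relpos b a := by
  have := a.isLt; have := b.isLt; have := x.isLt
  rw [Ne, Fin.ext_iff] at hx
  simp only [relpos_eq] at h ⊢
  split_ifs at h ⊢ <;> omega

lemma relpos_lt_relpos_iff_of_relpos_eq_one {a b x y : Fin (2 * n)} (h : relpos a b = 1)
    (hx : x ≠ a) (hy : y ≠ a) :
    relpos b x < relpos b y ↔ relpos a x < relpos a y := by
  have := a.isLt; have := b.isLt; have := x.isLt; have := y.isLt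
  rw [Ne, Fin.ext_iff] at hx hy
  simp only [relpos_eq] at h ⊢
  split_ifs at h ⊢ <;> omega

lemma relpos_eq_relpos_add_one {a b c : Fin (2 * n)} (h : relpos b c = 1) (hc : c ≠ a) :
    relpos a c = relpos a b + 1 := by
  have := a.isLt; have := b.isLt; have := c.isLt
  rw [Ne, Fin.ext_iff] at hc
  simp only [relpos_eq] at h ⊢
  split_ifs at h ⊢ <;> omega

def Adjacent (x y : Fin (2 * n)) : Prop := relpos x y = 1 ∨ relpos y x = 1

lemma Adjacent.relpos_eq {a x y : Fin (2 * n)} (h : Adjacent x y) (hx : x ≠ a) (hy : y ≠ a) :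
    relpos a y = relpos a x + 1 ∨ relpos a x = relpos a y + 1 :=
  h.imp (relpos_eq_relpos_add_one · hy) (relpos_eq_relpos_add_one · hx)

lemma ep_ne_ep (D : ChordDiagram n) {i j : Fin n} (h : i ≠ j) (b b' : Bool) :
    D.ep (i, b) ≠ D.ep (j, b') :=
  D.ep.injective.ne fun e => h (congrArg Prod.fst e)

lemma over_ne_under (D : ChordDiagram n) (i : Fin n) : D.over i ≠ D.under i :=
  D.ep.injective.ne fun e => Bool.noConfusion (congrArg Prod.snd e)

lemma Interlinks.symm {D : ChordDiagram n} {i j : Fin n} (h : D.Interlinks i j) :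
    D.Interlinks j i := by
  obtain ⟨hne, hx⟩ := h
  refine ⟨hne.symm, ?_⟩
  have h1 := D.over_ne_under i; have h2 := D.over_ne_under j
  have h3 := D.ep_ne_ep hne true true; have h4 := D.ep_ne_ep hne true false
  have h5 := D.ep_ne_ep hne false true; have h6 := D.ep_ne_ep hne false false
  have := (D.over i).isLt; have := (D.under i).isLt
  have := (D.over j).isLt; have := (D.under j).isLt
  simp only [ChordDiagram.over, under, Ne, Fin.ext_iff] at h1 h2 h3 h4 h5 h6 ⊢
  simp only [StrictlyBetween, Xor, relpos_eq, ChordDiagram.over, under] at hx ⊢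
  split_ifs at hx ⊢ <;> omega

lemma interlinks_comm {D : ChordDiagram n} {i j : Fin n} : D.Interlinks i j ↔ D.Interlinks j i :=
  ⟨Interlinks.symm, Interlinks.symm⟩

lemma relpos_over_lt_relpos_under_iff_of_adjacent (D : ChordDiagram n) {i j : Fin n}
    (hij : i ≠ j) (hover : Adjacent (D.over i) (D.over j))
    (hunder : Adjacent (D.under i) (D.under j)) {a : Fin (2 * n)}
    (ha : ∀ b, D.ep (i, b) ≠ a ∧ D.ep (j, b) ≠ a) :
    relpos a (D.over i) < relpos a (D.under i) ↔ relpos a (D.over j) < relpos a (D.under j) := by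
  have ho := hover.relpos_eq (a := a) (ha true).1 (ha true).2
  have hu := hunder.relpos_eq (a := a) (ha false).1 (ha false).2
  have hi : relpos a (D.over i) ≠ relpos a (D.under i) :=
    (relpos_injective a).ne (D.over_ne_under i)
  have hj : relpos a (D.over j) ≠ relpos a (D.under j) :=
    (relpos_injective a).ne (D.over_ne_under j)
  have hij' : relpos a (D.over i) ≠ relpos a (D.under j) :=
    (relpos_injective a).ne (D.ep_ne_ep hij true false)
  have hji : relpos a (D.under i) ≠ relpos a (D.over j) :=
    (relpos_injective a).ne (D.ep_ne_ep hij false true)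
  omega

lemma arcLabel_eq_sum (D : ChordDiagram n) (a : Fin (2 * n)) :
    D.arcLabel a = ∑ i, if relpos a (D.over i) < relpos a (D.under i) then D.sign i else 0 :=
  sum_filter _ _

lemma arcLabel_sub_arcLabel_of_relpos_eq_one (D : ChordDiagram n) {j : Fin n} {b : Bool}
    {x : Fin (2 * n)} (h : relpos (D.ep (j, b)) x = 1) :
    D.arcLabel x - D.arcLabel (D.ep (j, b)) =
      (if relpos x (D.over j) < relpos x (D.under j) then D.sign j else 0) -
        if relpos (D.ep (j, b)) (D.over j) < relpos (D.ep (j, b)) (D.under j)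
        then D.sign j else 0 := by
  have hrest : ∀ i ∈ univ.erase j,
      (if relpos x (D.over i) < relpos x (D.under i) then D.sign i else 0) =
        if relpos (D.ep (j, b)) (D.over i) < relpos (D.ep (j, b)) (D.under i)
        then D.sign i else 0 := fun i hi =>
    if_congr (relpos_lt_relpos_iff_of_relpos_eq_one h (D.ep_ne_ep (ne_of_mem_erase hi) _ _)
      (D.ep_ne_ep (ne_of_mem_erase hi) _ _)) rfl rfl
  rw [arcLabel_eq_sum, arcLabel_eq_sum, ← add_sum_erase _ _ (mem_univ j),
    ← add_sum_erase _ _ (mem_univ j), sum_congr rfl hrest]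
  ring

lemma arcLabel_of_relpos_over_eq_one (D : ChordDiagram n) {j : Fin n} {x : Fin (2 * n)}
    (h : relpos (D.over j) x = 1) : D.arcLabel x = D.arcLabel (D.over j) - D.sign j := by
  have hstep := D.arcLabel_sub_arcLabel_of_relpos_eq_one (b := true) h
  have hbefore : relpos (D.over j) (D.over j) < relpos (D.over j) (D.under j) := by
    rw [relpos_self, relpos_pos_iff]
    exact D.over_ne_under j
  have hafter : ¬ relpos x (D.over j) < relpos x (D.under j) :=
    not_lt.mpr (relpos_lt_relpos_of_relpos_eq_one h (D.over_ne_under j).symm).le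
  rw [show D.ep (j, true) = D.over j from rfl, if_pos hbefore, if_neg hafter] at hstep
  linarith

lemma arcLabel_of_relpos_under_eq_one (D : ChordDiagram n) {j : Fin n} {x : Fin (2 * n)}
    (h : relpos (D.under j) x = 1) : D.arcLabel x = D.arcLabel (D.under j) + D.sign j := by
  have hstep := D.arcLabel_sub_arcLabel_of_relpos_eq_one (b := false) h
  have hbefore : ¬ relpos (D.under j) (D.over j) < relpos (D.under j) (D.under j) := by
    rw [relpos_self]
    exact Nat.not_lt_zero _
  have hafter : relpos x (D.over j) < relpos x (D.under j) :=
    relpos_lt_relpos_of_relpos_eq_one h (D.over_ne_under j)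
  rw [show D.ep (j, false) = D.under j from rfl, if_neg hbefore, if_pos hafter] at hstep
  linarith

lemma chordVal_eq_of_adjacent (D : ChordDiagram n) {i j : Fin n} (hopp : D.sign i = -D.sign j)
    (hover : Adjacent (D.over i) (D.over j)) (hunder : Adjacent (D.under i) (D.under j)) :
    D.chordVal i = D.chordVal j := by
  have hO : D.arcLabel (D.over j) = D.arcLabel (D.over i) - D.sign i := by
    rcases hover with h | h
    · exact D.arcLabel_of_relpos_over_eq_one h
    · rw [D.arcLabel_of_relpos_over_eq_one h, hopp]; ring
  have hU : D.arcLabel (D.under j) = D.arcLabel (D.under i) + D.sign i := by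
    rcases hunder with h | h
    · exact D.arcLabel_of_relpos_under_eq_one h
    · rw [D.arcLabel_of_relpos_under_eq_one h, hopp]; ring
  unfold chordVal
  rw [hO, hU, hopp]
  rcases D.sign_unit j with hj | hj <;> norm_num [hj]

lemma interlinkCount_eq_of_parallel (D : ChordDiagram n) {i j : Fin n}
    (hpar : ∀ k, k ≠ i → k ≠ j → (D.Interlinks i k ↔ D.Interlinks j k)) :
    D.interlinkCount i = D.interlinkCount j := by
  refine card_equiv (Equiv.swap i j) fun k => ?_
  simp only [mem_filter, mem_univ, true_and]
  rcases eq_or_ne k i with rfl | hki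
  · simp [Interlinks]
  rcases eq_or_ne k j with rfl | hkj
  · simpa using interlinks_comm
  rw [Equiv.swap_apply_of_ne_of_ne hki hkj]
  exact hpar k hki hkj

noncomputable def owpTerm (D : ChordDiagram n) (i : Fin n) : LaurentPolynomial ℤ :=
  if D.OddChord i then C (D.sign i) * T (D.chordVal i) else 0

lemma owp_eq_sum_owpTerm (D : ChordDiagram n) : D.owp = ∑ i, D.owpTerm i :=
  sum_filter _ _

lemma owpTerm_add_owpTerm_eq_zero (D : ChordDiagram n) {i j : Fin n}
    (hopp : D.sign i = -D.sign j) (hover : Adjacent (D.over i) (D.over j))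
    (hunder : Adjacent (D.under i) (D.under j))
    (hpar : ∀ k, k ≠ i → k ≠ j → (D.Interlinks i k ↔ D.Interlinks j k)) :
    D.owpTerm i + D.owpTerm j = 0 := by
  have hodd : D.OddChord i ↔ D.OddChord j := by
    rw [OddChord, OddChord, D.interlinkCount_eq_of_parallel hpar]
  unfold owpTerm
  rw [if_congr hodd rfl rfl, D.chordVal_eq_of_adjacent hopp hover hunder, hopp]
  split_ifs <;> simp

section Deletion

variable {D : ChordDiagram (n + 2)} {D' : ChordDiagram n} {cm cn : Fin (n + 2)}
  {ψ : Fin n ↪ Fin (n + 2)} {φ : Fin (2 * n) → Fin (2 * (n + 2))}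

lemma ep_ne_map_of_forall_ne (hep : ∀ (k : Fin n) (b : Bool), D.ep (ψ k, b) = φ (D'.ep (k, b)))
    (hc : ∀ k, ψ k ≠ cm) (b : Bool) (a : Fin (2 * n)) : D.ep (cm, b) ≠ φ a := by
  rw [← D'.ep.apply_symm_apply a, ← hep]
  exact D.ep_ne_ep (hc _).symm _ _

lemma strictlyBetween_map_iff (hφ : StrictMono φ)
    (hep : ∀ (k : Fin n) (b : Bool), D.ep (ψ k, b) = φ (D'.ep (k, b))) (k : Fin n)
    (x : Fin (2 * n)) : D.StrictlyBetween (ψ k) (φ x) ↔ D'.StrictlyBetween k x := by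
  simp only [StrictlyBetween, ChordDiagram.over, under, hep, relpos_pos_iff, hφ.injective.ne_iff,
    relpos_lt_relpos_comp_iff hφ]

lemma interlinks_map_iff (hφ : StrictMono φ)
    (hep : ∀ (k : Fin n) (b : Bool), D.ep (ψ k, b) = φ (D'.ep (k, b))) (k j : Fin n) :
    D.Interlinks (ψ k) (ψ j) ↔ D'.Interlinks k j := by
  have hover : D.over (ψ j) = φ (D'.over j) := hep j true
  have hunder : D.under (ψ j) = φ (D'.under j) := hep j false
  rw [Interlinks, Interlinks, ψ.injective.ne_iff, hover, hunder,
    strictlyBetween_map_iff hφ hep, strictlyBetween_map_iff hφ hep]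

lemma arcLabel_map (hmn : cm ≠ cn) (hψ : ∀ k, ψ k ≠ cm ∧ ψ k ≠ cn) (hφ : StrictMono φ)
    (hep : ∀ (k : Fin n) (b : Bool), D.ep (ψ k, b) = φ (D'.ep (k, b)))
    (hsign : ∀ k, D.sign (ψ k) = D'.sign k) (hopp : D.sign cm = -D.sign cn)
    (hover : Adjacent (D.over cm) (D.over cn)) (hunder : Adjacent (D.under cm) (D.under cn))
    (a : Fin (2 * n)) : D.arcLabel (φ a) = D'.arcLabel a := by
  have hpair := D.relpos_over_lt_relpos_under_iff_of_adjacent hmn hover hunder (a := φ a)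
    fun b => ⟨ep_ne_map_of_forall_ne hep (fun k => (hψ k).1) b a,
      ep_ne_map_of_forall_ne hep (fun k => (hψ k).2) b a⟩
  have hrest : ∀ k : Fin n,
      (if relpos (φ a) (D.over (ψ k)) < relpos (φ a) (D.under (ψ k)) then D.sign (ψ k) else 0) =
        if relpos a (D'.over k) < relpos a (D'.under k) then D'.sign k else 0 := fun k =>
    if_congr (by rw [ChordDiagram.over, under, hep, hep]; exact relpos_lt_relpos_comp_iff hφ _ _ _)
      (hsign k) rfl
  rw [arcLabel_eq_sum, arcLabel_eq_sum, sum_univ_eq_add_add_sum_embedding (by simp) hmn ψ hψ,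
    if_congr hpair rfl rfl, hopp, Fintype.sum_congr _ _ hrest]
  split_ifs <;> ring

lemma chordVal_map (hmn : cm ≠ cn) (hψ : ∀ k, ψ k ≠ cm ∧ ψ k ≠ cn) (hφ : StrictMono φ)
    (hep : ∀ (k : Fin n) (b : Bool), D.ep (ψ k, b) = φ (D'.ep (k, b)))
    (hsign : ∀ k, D.sign (ψ k) = D'.sign k) (hopp : D.sign cm = -D.sign cn)
    (hover : Adjacent (D.over cm) (D.over cn)) (hunder : Adjacent (D.under cm) (D.under cn))
    (k : Fin n) : D.chordVal (ψ k) = D'.chordVal k := by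
  have harc := arcLabel_map hmn hψ hφ hep hsign hopp hover hunder
  rw [chordVal, chordVal, ChordDiagram.over, under, hep, hep, harc, harc, hsign]; rfl

lemma interlinkCount_map (hmn : cm ≠ cn) (hψ : ∀ k, ψ k ≠ cm ∧ ψ k ≠ cn) (hφ : StrictMono φ)
    (hep : ∀ (k : Fin n) (b : Bool), D.ep (ψ k, b) = φ (D'.ep (k, b))) (k : Fin n) :
    D.interlinkCount (ψ k) = (if D.Interlinks (ψ k) cm then 1 else 0) +
      (if D.Interlinks (ψ k) cn then 1 else 0) + D'.interlinkCount k := by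
  rw [interlinkCount, interlinkCount, card_filter, card_filter,
    sum_univ_eq_add_add_sum_embedding (by simp) hmn ψ hψ]
  simp only [interlinks_map_iff hφ hep]

lemma oddChord_map (hmn : cm ≠ cn) (hψ : ∀ k, ψ k ≠ cm ∧ ψ k ≠ cn) (hφ : StrictMono φ)
    (hep : ∀ (k : Fin n) (b : Bool), D.ep (ψ k, b) = φ (D'.ep (k, b)))
    (hpar : ∀ k, k ≠ cm → k ≠ cn → (D.Interlinks cm k ↔ D.Interlinks cn k)) (k : Fin n) :
    D.OddChord (ψ k) ↔ D'.OddChord k := by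
  have hsame : D.Interlinks (ψ k) cm ↔ D.Interlinks (ψ k) cn := by
    rw [interlinks_comm, hpar _ (hψ k).1 (hψ k).2, interlinks_comm]
  rw [OddChord, OddChord, interlinkCount_map hmn hψ hφ hep, if_congr hsame rfl rfl,
    Nat.odd_iff, Nat.odd_iff]
  split_ifs <;> omega

lemma owpTerm_map (hmn : cm ≠ cn) (hψ : ∀ k, ψ k ≠ cm ∧ ψ k ≠ cn) (hφ : StrictMono φ)
    (hep : ∀ (k : Fin n) (b : Bool), D.ep (ψ k, b) = φ (D'.ep (k, b)))
    (hsign : ∀ k, D.sign (ψ k) = D'.sign k) (hopp : D.sign cm = -D.sign cn)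
    (hover : Adjacent (D.over cm) (D.over cn)) (hunder : Adjacent (D.under cm) (D.under cn))
    (hpar : ∀ k, k ≠ cm → k ≠ cn → (D.Interlinks cm k ↔ D.Interlinks cn k)) (k : Fin n) :
    D.owpTerm (ψ k) = D'.owpTerm k := by
  rw [owpTerm, owpTerm, if_congr (oddChord_map hmn hψ hφ hep hpar k) rfl rfl, hsign,
    chordVal_map hmn hψ hφ hep hsign hopp hover hunder]

end Deletion

end ChordDiagram

theorem stmt_6_general {n : ℕ} (D : ChordDiagram (n + 2)) (D' : ChordDiagram n)
    (cm cn : Fin (n + 2)) (hmn : cm ≠ cn)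
    (ψ : Fin n ↪ Fin (n + 2)) (hψ : ∀ k, ψ k ≠ cm ∧ ψ k ≠ cn)
    (φ : Fin (2 * n) → Fin (2 * (n + 2))) (hφ : StrictMono φ)
    (hep : ∀ (k : Fin n) (b : Bool), D.ep (ψ k, b) = φ (D'.ep (k, b)))
    (hsign : ∀ k, D.sign (ψ k) = D'.sign k)
    (hopp : D.sign cm = -D.sign cn)
    (hover : relpos (D.over cm) (D.over cn) = 1 ∨ relpos (D.over cn) (D.over cm) = 1)
    (hunder : relpos (D.under cm) (D.under cn) = 1 ∨ relpos (D.under cn) (D.under cm) = 1)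
    (hpar : ∀ k, k ≠ cm → k ≠ cn → (D.Interlinks cm k ↔ D.Interlinks cn k)) :
    D.owp = D'.owp := by
  rw [owp_eq_sum_owpTerm, owp_eq_sum_owpTerm,
    sum_univ_eq_add_add_sum_embedding (by simp) hmn ψ hψ,
    D.owpTerm_add_owpTerm_eq_zero hopp hover hunder hpar, zero_add]
  exact Fintype.sum_congr _ _ (owpTerm_map hmn hψ hφ hep hsign hopp hover hunder hpar)

/-- the odd writhe polynomial is invariant under the Gauss-diagram
Reidemeister move Ω2: if two parallel chords `cm, cn` of `D` have opposite signs,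
their over endpoints adjacent on the circle and their under endpoints adjacent on
the circle, then deleting both (yielding `D'`, via the strictly monotone
relabelling `φ` and the chord relabelling `ψ`) does not change the polynomial. -/
theorem stmt_6 {n : ℕ} (D : ChordDiagram (n + 2)) (D' : ChordDiagram n)
    (cm cn : Fin (n + 2)) (hmn : cm ≠ cn)
    (ψ : Fin n ↪ Fin (n + 2)) (hψ : ∀ k, ψ k ≠ cm ∧ ψ k ≠ cn)
    (φ : Fin (2 * n) → Fin (2 * (n + 2))) (hφ : StrictMono φ)
    (hep : ∀ (k : Fin n) (b : Bool), D.ep (ψ k, b) = φ (D'.ep (k, b)))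
    (hsign : ∀ k, D.sign (ψ k) = D'.sign k)
    (hopp : D.sign cm = -D.sign cn)
    (hover : relpos (D.over cm) (D.over cn) = 1 ∨ relpos (D.over cn) (D.over cm) = 1)
    (hunder : relpos (D.under cm) (D.under cn) = 1 ∨ relpos (D.under cn) (D.under cm) = 1)
    (hpar : ∀ k, k ≠ cm → k ≠ cn → (D.Interlinks cm k ↔ D.Interlinks cn k))
    (hnl : ¬ D.Interlinks cm cn) :
    D.owp = D'.owp :=
  stmt_6_general D D' cm cn hmn ψ hψ φ hφ hep hsign hopp hover hunder hpar
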